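/- Let e₁, …, eₙ be an orthonormal basis of V and let ω = Σᵢ γ(vᵢ)∘Bᵢ be a finite sum where vᵢ ∈ V and each Bᵢ is an endomorphism of E that anticommutes with γ(w) for every w ∈ V. Then (ε/4) Σₖ₌₁ⁿ ηₖ tr({γ(eₖ), ω}∘{γ(eₖ), ω}) = (n − 1) tr(ω∘ω), where {·,·} denotes the anticommutator. (This is the Clifford trace identity for the quantized one-form /α_YM = δ_γ(d_A μ_YM), responsible for the kinetic term of the Higgs field with its coefficient proportional to (n−1)³/n² in the Dirac action.) -/

import Mathlib

/-!
Write `cₖ = γ(eₖ)`, so that `cₖ² = ε ηₖ`. Expanding `{cₖ, ω}²` and using cyclicity of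
the trace, `tr({cₖ, ω}²) = 2 tr(cₖ ω cₖ ω) + 2 ε ηₖ tr(ω²)`. From
`cₖ γ(v) = 2ε g(v, eₖ) − γ(v) cₖ` and `v = Σₖ ηₖ g(v, eₖ) eₖ` one gets the contraction
identity `Σₖ ηₖ cₖ γ(v) cₖ = ε (2 − n) γ(v)`; since each `Bᵢ` anticommutes with `cₖ`, it
becomes `Σₖ ηₖ cₖ ω cₖ = ε (n − 2) ω`. The left-hand side is therefore
`(ε/4)(2ε(n − 2) + 2εn) tr(ω²) = (n − 1) tr(ω²)`.
-/

open Finset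

section CliffordFrame

variable {V ι A : Type*} [AddCommGroup V] [Module ℝ V] [Ring A] [Algebra ℝ A]
  (g : V → V → ℝ) (γ : V →ₗ[ℝ] A) (ε : ℝ)

theorem clifford_mul_self
    (hcl : ∀ v w, γ v * γ w + γ w * γ v = algebraMap ℝ A (2 * ε * g v w)) (v : V) :
    γ v * γ v = algebraMap ℝ A (ε * g v v) := by
  calc γ v * γ v = (2⁻¹ : ℝ) • (γ v * γ v + γ v * γ v) := by
        rw [← two_smul ℝ, smul_smul]; norm_num
    _ = algebraMap ℝ A (ε * g v v) := by
        rw [hcl, Algebra.smul_def, ← map_mul]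
        congr 1
        ring

variable [Fintype ι] (e : Module.Basis ι ℝ V) (η : ι → ℝ)

theorem apply_basis_eq_repr_mul (hgadd : ∀ u v w : V, g (u + v) w = g u w + g v w)
    (hgsmul : ∀ (c : ℝ) (v w : V), g (c • v) w = c * g v w)
    (horth : ∀ i j, i ≠ j → g (e i) (e j) = 0) (hdiag : ∀ i, g (e i) (e i) = η i)
    (v : V) (j : ι) : g v (e j) = e.repr v j * η j := by
  let f : V →ₗ[ℝ] ℝ :=
    IsLinearMap.mk' (g · (e j)) ⟨fun u v => hgadd u v _, fun c v => hgsmul c v _⟩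
  calc g v (e j) = f (∑ k, e.repr v k • e k) := by rw [e.sum_repr]; rfl
    _ = ∑ k, e.repr v k * g (e k) (e j) := by simp only [map_sum, map_smul, smul_eq_mul]; rfl
    _ = e.repr v j * η j := by
      rw [sum_eq_single j (fun k _ hk => by rw [horth k j hk, mul_zero]) (by simp), hdiag]

theorem sum_smul_basis_eq (hgadd : ∀ u v w : V, g (u + v) w = g u w + g v w)
    (hgsmul : ∀ (c : ℝ) (v w : V), g (c • v) w = c * g v w)
    (horth : ∀ i j, i ≠ j → g (e i) (e j) = 0) (hdiag : ∀ i, g (e i) (e i) = η i)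
    (hη : ∀ k, η k * η k = 1) (v : V) :
    ∑ k, (η k * g v (e k)) • e k = v := by
  conv_rhs => rw [← e.sum_repr v]
  refine sum_congr rfl fun k _ => ?_
  rw [apply_basis_eq_repr_mul g e η hgadd hgsmul horth hdiag]
  congr 1
  linear_combination e.repr v k * hη k

theorem sum_smul_clifford_mul_mul (hgadd : ∀ u v w : V, g (u + v) w = g u w + g v w)
    (hgsmul : ∀ (c : ℝ) (v w : V), g (c • v) w = c * g v w)
    (horth : ∀ i j, i ≠ j → g (e i) (e j) = 0) (hdiag : ∀ i, g (e i) (e i) = η i)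
    (hη : ∀ k, η k * η k = 1)
    (hcl : ∀ v w, γ v * γ w + γ w * γ v = algebraMap ℝ A (2 * ε * g v w)) (v : V) :
    ∑ k, η k • (γ (e k) * γ v * γ (e k)) = (ε * (2 - Fintype.card ι)) • γ v := by
  have hterm : ∀ k, η k • (γ (e k) * γ v * γ (e k))
      = (2 * ε) • (η k * g v (e k)) • γ (e k) - ε • γ v := by
    intro k
    have hswap : γ (e k) * γ v = algebraMap ℝ A (2 * ε * g v (e k)) - γ v * γ (e k) := by
      rw [← hcl]; abel
    rw [hswap, sub_mul, mul_assoc (γ v), clifford_mul_self g γ ε hcl, hdiag,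
      ← Algebra.commutes, ← Algebra.smul_def, ← Algebra.smul_def]
    match_scalars
    · ring
    · linear_combination -ε * hη k
  calc ∑ k, η k • (γ (e k) * γ v * γ (e k))
      = (2 * ε) • γ (∑ k, (η k * g v (e k)) • e k) - ε • Fintype.card ι • γ v := by
        simp only [hterm, sum_sub_distrib, map_sum, map_smul, ← smul_sum, sum_const, card_univ]
    _ = (ε * (2 - Fintype.card ι)) • γ v := by
        rw [sum_smul_basis_eq g e η hgadd hgsmul horth hdiag hη, ← Nat.cast_smul_eq_nsmul ℝ]
        module

theorem sum_smul_clifford_mul_mul_of_anticomm (hgadd : ∀ u v w : V, g (u + v) w = g u w + g v w)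
    (hgsmul : ∀ (c : ℝ) (v w : V), g (c • v) w = c * g v w)
    (horth : ∀ i j, i ≠ j → g (e i) (e j) = 0) (hdiag : ∀ i, g (e i) (e i) = η i)
    (hη : ∀ k, η k * η k = 1)
    (hcl : ∀ v w, γ v * γ w + γ w * γ v = algebraMap ℝ A (2 * ε * g v w))
    {κ : Type*} (s : Finset κ) (vs : κ → V) (b : κ → A)
    (hb : ∀ i w, b i * γ w + γ w * b i = 0) :
    ∑ k, η k • (γ (e k) * (∑ i ∈ s, γ (vs i) * b i) * γ (e k))
      = (ε * (Fintype.card ι - 2)) • ∑ i ∈ s, γ (vs i) * b i := by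
  have hterm : ∀ i k, η k • (γ (e k) * (γ (vs i) * b i) * γ (e k))
      = -((η k • (γ (e k) * γ (vs i) * γ (e k))) * b i) := by
    intro i k
    rw [smul_mul_assoc, ← smul_neg, mul_assoc, mul_assoc, eq_neg_of_add_eq_zero_left (hb i (e k))]
    noncomm_ring
  simp only [mul_sum, sum_mul, smul_sum, hterm]
  rw [sum_comm]
  refine sum_congr rfl fun i _ => ?_
  rw [sum_neg_distrib, ← sum_mul,
    sum_smul_clifford_mul_mul g γ ε e η hgadd hgsmul horth hdiag hη hcl, smul_mul_assoc, ← neg_smul]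
  congr 1
  ring

end CliffordFrame

theorem LinearMap.trace_anticomm_mul_self {R M : Type*} [CommRing R] [AddCommGroup M]
    [Module R M] (c ω : Module.End R M) (r : R) (hc : c * c = r • 1) :
    trace R M ((c * ω + ω * c) * (c * ω + ω * c))
      = 2 * trace R M (c * ω * c * ω) + 2 * r * trace R M (ω * ω) := by
  have hexpand : (c * ω + ω * c) * (c * ω + ω * c)
      = c * ω * c * ω + c * (ω * ω * c) + ω * (c * c) * ω + ω * c * ω * c := by
    noncomm_ring
  have hcycle : trace R M (ω * c * ω * c) = trace R M (c * ω * c * ω) := by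
    rw [trace_mul_comm, ← mul_assoc, ← mul_assoc]
  have hsquare : trace R M (c * (ω * ω * c)) = r * trace R M (ω * ω) := by
    rw [trace_mul_comm, mul_assoc, hc, mul_smul_comm, mul_one, map_smul, smul_eq_mul]
  have hsquare' : trace R M (ω * (c * c) * ω) = r * trace R M (ω * ω) := by
    rw [hc, mul_smul_comm, mul_one, smul_mul_assoc, map_smul, smul_eq_mul]
  rw [hexpand, map_add, map_add, map_add, hcycle, hsquare, hsquare']
  ring

theorem LinearMap.sum_mul_trace_anticomm_mul_self {R M ι : Type*} [CommRing R] [AddCommGroup M]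
    [Module R M] [Fintype ι] (c : ι → Module.End R M) (ω : Module.End R M) (η : ι → R) (r : R)
    (hc : ∀ k, c k * c k = (r * η k) • 1) (hη : ∀ k, η k * η k = 1) :
    ∑ k, η k * trace R M ((c k * ω + ω * c k) * (c k * ω + ω * c k))
      = 2 * trace R M ((∑ k, η k • (c k * ω * c k)) * ω)
        + 2 * r * Fintype.card ι * trace R M (ω * ω) := by
  have hterm : ∀ k, η k * trace R M ((c k * ω + ω * c k) * (c k * ω + ω * c k))
      = 2 * trace R M ((η k • (c k * ω * c k)) * ω) + 2 * r * trace R M (ω * ω) := fun k => by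
    rw [trace_anticomm_mul_self _ _ _ (hc k), smul_mul_assoc, map_smul, smul_eq_mul]
    linear_combination 2 * r * trace R M (ω * ω) * hη k
  rw [sum_congr rfl fun k _ => hterm k, sum_add_distrib, ← mul_sum, ← map_sum, ← sum_mul,
    sum_const, card_univ, nsmul_eq_mul]
  ring

theorem stmt_17_general (V : Type*) [AddCommGroup V] [Module ℝ V]
    (E : Type*) [AddCommGroup E] [Module ℂ E]
    (g : V → V → ℝ)
    (hgadd : ∀ u v w : V, g (u + v) w = g u w + g v w)
    (hgsmul : ∀ (c : ℝ) (v w : V), g (c • v) w = c * g v w)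
    (ε : ℝ) (hε : ε = 1 ∨ ε = -1)
    (γ : V → Module.End ℂ E)
    (hγadd : ∀ v w : V, γ (v + w) = γ v + γ w)
    (hγsmul : ∀ (c : ℝ) (v : V), γ (c • v) = (c : ℂ) • γ v)
    (hcl : ∀ v w : V, γ v * γ w + γ w * γ v = ((2 * ε * g v w : ℝ) : ℂ) • 1)
    (n : ℕ) (e : Module.Basis (Fin n) ℝ V)
    (η : Fin n → ℝ) (hη : ∀ k, η k = 1 ∨ η k = -1)
    (horth : ∀ i j : Fin n, i ≠ j → g (e i) (e j) = 0)
    (hdiag : ∀ i : Fin n, g (e i) (e i) = η i)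
    (m : ℕ) (vs : Fin m → V) (B : Fin m → Module.End ℂ E)
    (hB : ∀ (i : Fin m) (w : V), B i * γ w + γ w * B i = 0)
    (ω : Module.End ℂ E)
    (hω : ω = ∑ i : Fin m, γ (vs i) * B i) :
    ((ε : ℂ) / 4) * ∑ k : Fin n, ((η k : ℝ) : ℂ) *
        LinearMap.trace ℂ E ((γ (e k) * ω + ω * γ (e k)) * (γ (e k) * ω + ω * γ (e k)))
      = ((n : ℂ) - 1) * LinearMap.trace ℂ E (ω * ω) := by
  have hη2 : ∀ k, η k * η k = 1 := fun k => by rcases hη k with h | h <;> simp [h]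
  let Γ : V →ₗ[ℝ] Module.End ℂ E :=
    ⟨⟨γ, hγadd⟩, fun c v => (hγsmul c v).trans (Complex.coe_smul c _)⟩
  have hclΓ : ∀ v w, Γ v * Γ w + Γ w * Γ v = algebraMap ℝ _ (2 * ε * g v w) := fun v w => by
    rw [Algebra.algebraMap_eq_smul_one, ← Complex.coe_smul]
    exact hcl v w
  have hsq : ∀ k, γ (e k) * γ (e k) = ((ε : ℂ) * η k) • 1 := fun k => by
    rw [← hdiag, ← Complex.ofReal_mul, Complex.coe_smul, ← Algebra.algebraMap_eq_smul_one]
    exact clifford_mul_self g Γ ε hclΓ (e k)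
  have hcontract :
      ∑ k, ((η k : ℝ) : ℂ) • (γ (e k) * ω * γ (e k)) = ((ε * (n - 2) : ℝ) : ℂ) • ω := by
    have h := sum_smul_clifford_mul_mul_of_anticomm g Γ ε e η hgadd hgsmul horth hdiag hη2 hclΓ
      univ vs B hB
    rw [Fintype.card_fin] at h
    simp only [Complex.coe_smul, hω]
    exact h
  have hε2 : (ε : ℂ) * ε = 1 := by rcases hε with h | h <;> simp [h]
  rw [LinearMap.sum_mul_trace_anticomm_mul_self _ _ _ (ε : ℂ) hsq
    (fun k => by exact_mod_cast hη2 k), hcontract, smul_mul_assoc, map_smul, smul_eq_mul,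
    Fintype.card_fin]
  push_cast
  linear_combination ((n : ℂ) - 1) * LinearMap.trace ℂ E (ω * ω) * hε2

/-- Clifford trace identity for a quantized one-form
`ω = Σᵢ γ(vᵢ)∘Bᵢ` with each `Bᵢ` anticommuting with the Clifford action:
`(ε/4) Σₖ ηₖ tr({γ(eₖ), ω}∘{γ(eₖ), ω}) = (n − 1) tr(ω∘ω)`. -/
theorem stmt_17 (V : Type*) [AddCommGroup V] [Module ℝ V]
    (E : Type*) [AddCommGroup E] [Module ℂ E] [FiniteDimensional ℂ E]
    (g : V → V → ℝ) (hg : ∀ v w : V, g v w = g w v)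
    (hgadd : ∀ u v w : V, g (u + v) w = g u w + g v w)
    (hgsmul : ∀ (c : ℝ) (v w : V), g (c • v) w = c * g v w)
    (ε : ℝ) (hε : ε = 1 ∨ ε = -1)
    (γ : V → Module.End ℂ E)
    (hγadd : ∀ v w : V, γ (v + w) = γ v + γ w)
    (hγsmul : ∀ (c : ℝ) (v : V), γ (c • v) = (c : ℂ) • γ v)
    (hcl : ∀ v w : V, γ v * γ w + γ w * γ v = ((2 * ε * g v w : ℝ) : ℂ) • 1)
    (n : ℕ) (e : Module.Basis (Fin n) ℝ V)
    (η : Fin n → ℝ) (hη : ∀ k, η k = 1 ∨ η k = -1)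
    (horth : ∀ i j : Fin n, i ≠ j → g (e i) (e j) = 0)
    (hdiag : ∀ i : Fin n, g (e i) (e i) = η i)
    (m : ℕ) (vs : Fin m → V) (B : Fin m → Module.End ℂ E)
    (hB : ∀ (i : Fin m) (w : V), B i * γ w + γ w * B i = 0)
    (ω : Module.End ℂ E)
    (hω : ω = ∑ i : Fin m, γ (vs i) * B i) :
    ((ε : ℂ) / 4) * ∑ k : Fin n, ((η k : ℝ) : ℂ) *
        LinearMap.trace ℂ E ((γ (e k) * ω + ω * γ (e k)) * (γ (e k) * ω + ω * γ (e k)))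
      = ((n : ℂ) - 1) * LinearMap.trace ℂ E (ω * ω) :=
  stmt_17_general V E g hgadd hgsmul ε hε γ hγadd hγsmul hcl n e η hη horth hdiag m vs B hB ω hω
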